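/- Let X be a Banach space with a Schauder basis whose basis projections P_n satisfy ‖I − 2P_n‖ = 1 for all n (unconditional basis with unconditional constant 1). Then every strongly extreme point of B_X is denting. -/

import Mathlib

/-!
A strongly extreme point `x` of the unit ball has norm one and a uniform modulus: `‖x ± u‖ ≤ 1 + δ`
forces `‖u‖ ≤ e`. Since `I - 2 Pₙ` is a contraction, a point `y` of the ball whose head `Pₙ y` is
close to `Pₙ x` has a small tail `y - Pₙ y` (both `x ± (y - Pₙ y)` lie almost in the ball), so `y`
is close to `x` once `Pₙ x ≈ x`. Hence the points of the ball at distance `≥ r` from `x` have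
heads `ρ`-far from `Pₙ x`, lying in a compact subset of the finite-dimensional range of `Pₙ`; cover
it by `k` balls of radius `ρ / 4`. If a convex combination `c` of such points were close to
`x`, pigeonhole would give a group of them of total weight `μ ≥ 1 / (k + 1)` whose partial sum `s`
satisfies `c ± (s - μ • c) ∈ B_X`; the modulus makes `s - μ • c` small while its head has norm
`≥ μ ρ / 4`. So `x` is not in the closed convex hull of `B_X \ B(x, r)`, and Hahn–Banach separation
gives a slice of `B_X` containing `x` inside `B(x, r)`.
-/

open Filter Topology Metric Finset

section

variable {X : Type*} [NormedAddCommGroup X] [NormedSpace ℝ X]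

def IsStronglyExtreme (x : X) : Prop :=
  ∀ u : ℕ → X, Tendsto (fun n => ‖x + u n‖) atTop (𝓝 1) →
    Tendsto (fun n => ‖x - u n‖) atTop (𝓝 1) → Tendsto (fun n => ‖u n‖) atTop (𝓝 0)

theorem exists_norm_eq_one_eq_norm_smul [Nontrivial X] (x : X) :
    ∃ a : X, ‖a‖ = 1 ∧ x = ‖x‖ • a := by
  rcases eq_or_ne x 0 with rfl | hx
  · obtain ⟨a, ha⟩ := exists_norm_eq X zero_le_one
    exact ⟨a, ha, by simp⟩
  · refine ⟨‖x‖⁻¹ • x, norm_smul_inv_norm hx, ?_⟩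
    rw [smul_smul, mul_inv_cancel₀ (norm_ne_zero_iff.mpr hx), one_smul]

theorem exists_norm_eq_one_norm_two_smul_sub_eq_one (hX : 1 < Module.rank ℝ X) {x : X}
    (hx : ‖x‖ ≤ 1) : ∃ z : X, ‖z‖ = 1 ∧ ‖(2 : ℝ) • x - z‖ = 1 := by
  have : Nontrivial X := rank_pos_iff_nontrivial.mp (zero_lt_one.trans hX)
  obtain ⟨a, ha, hxa⟩ := exists_norm_eq_one_eq_norm_smul x
  have hlo : ‖(2 : ℝ) • x - a‖ ≤ 1 := by
    rw [show (2 : ℝ) • x - a = (2 * ‖x‖ - 1) • a by rw [sub_smul, one_smul, mul_smul, ← hxa],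
      norm_smul, ha, mul_one, Real.norm_eq_abs, abs_le]
    constructor <;> linarith [norm_nonneg x]
  have hhi : 1 ≤ ‖(2 : ℝ) • x - -a‖ := by
    rw [show (2 : ℝ) • x - -a = (2 * ‖x‖ + 1) • a by rw [add_smul, one_smul, mul_smul, ← hxa,
      sub_neg_eq_add], norm_smul, ha, mul_one, Real.norm_of_nonneg (by positivity)]
    linarith [norm_nonneg x]
  obtain ⟨z, hz, hz1⟩ := (isConnected_sphere hX 0 zero_le_one).isPreconnected.intermediate_value
    (f := fun z => ‖(2 : ℝ) • x - z‖) (by simpa using ha) (by simpa using ha) (by fun_prop)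
    ⟨hlo, hhi⟩
  exact ⟨z, by simpa using hz, hz1⟩

theorem IsStronglyExtreme.norm_eq_one (hX : 1 < Module.rank ℝ X) {x : X}
    (hse : IsStronglyExtreme x) (hx : ‖x‖ ≤ 1) : ‖x‖ = 1 := by
  obtain ⟨z, hz, hxz⟩ := exists_norm_eq_one_norm_two_smul_sub_eq_one hX hx
  have hu := hse (fun _ => x - z) (by simp [← hxz, two_smul, add_sub_assoc]) (by simp [hz])
  rw [tendsto_const_nhds_iff, norm_eq_zero, sub_eq_zero] at hu
  rwa [hu]

theorem IsStronglyExtreme.exists_modulus {x : X} (hse : IsStronglyExtreme x) (hx : ‖x‖ = 1)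
    {e : ℝ} (he : 0 < e) :
    ∃ δ > 0, ∀ u : X, ‖x + u‖ ≤ 1 + δ → ‖x - u‖ ≤ 1 + δ → ‖u‖ ≤ e := by
  by_contra! h
  choose u hadd hsub hue using fun n : ℕ => h (1 / (n + 1)) Nat.one_div_pos_of_nat
  have hsum (v : X) : 2 ≤ ‖x + v‖ + ‖x - v‖ := by
    calc (2 : ℝ) = ‖(x + v) + (x - v)‖ := by
          rw [show (x + v) + (x - v) = (2 : ℝ) • x by module, norm_smul, hx]; norm_num
      _ ≤ _ := norm_add_le _ _
  have hlim := tendsto_one_div_add_atTop_nhds_zero_nat (𝕜 := ℝ)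
  have hup : Tendsto (fun n : ℕ => 1 + 1 / ((n : ℝ) + 1)) atTop (𝓝 1) := by
    simpa using hlim.const_add 1
  have hlow : Tendsto (fun n : ℕ => 1 - 1 / ((n : ℝ) + 1)) atTop (𝓝 1) := by
    simpa using hlim.const_sub 1
  have hlim_add : Tendsto (fun n => ‖x + u n‖) atTop (𝓝 1) :=
    tendsto_of_tendsto_of_tendsto_of_le_of_le hlow hup
      (fun n => by linarith [hsum (u n), hsub n]) hadd
  have hlim_sub : Tendsto (fun n => ‖x - u n‖) atTop (𝓝 1) :=
    tendsto_of_tendsto_of_tendsto_of_le_of_le hlow hup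
      (fun n => by linarith [hsum (u n), hadd n]) hsub
  linarith [ge_of_tendsto (hse u hlim_add hlim_sub) (Eventually.of_forall fun n => (hue n).le)]

section Projection

variable {P : X →L[ℝ] X}

theorem norm_sub_two_smul_apply_le (hP : ‖ContinuousLinearMap.id ℝ X - 2 • P‖ ≤ 1) (y : X) :
    ‖y - 2 • P y‖ ≤ ‖y‖ :=
  calc ‖y - 2 • P y‖ = ‖(ContinuousLinearMap.id ℝ X - 2 • P) y‖ := rfl
    _ ≤ ‖ContinuousLinearMap.id ℝ X - 2 • P‖ * ‖y‖ := ContinuousLinearMap.le_opNorm _ _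
    _ ≤ ‖y‖ := mul_le_of_le_one_left (norm_nonneg y) hP

theorem norm_apply_le_of_norm_id_sub_two_smul_le_one
    (hP : ‖ContinuousLinearMap.id ℝ X - 2 • P‖ ≤ 1) (y : X) : ‖P y‖ ≤ ‖y‖ := by
  have h : 2 * ‖P y‖ ≤ ‖y‖ + ‖y - 2 • P y‖ :=
    calc 2 * ‖P y‖ = ‖y - (y - 2 • P y)‖ := by
          rw [sub_sub_cancel, two_nsmul, ← two_smul ℝ, norm_smul, Real.norm_two]
      _ ≤ _ := norm_sub_le _ _
  linarith [norm_sub_two_smul_apply_le hP y]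

theorem norm_sub_le_of_norm_apply_sub_le {x y : X} {δ e : ℝ}
    (hmod : ∀ u : X, ‖x + u‖ ≤ 1 + δ → ‖x - u‖ ≤ 1 + δ → ‖u‖ ≤ e)
    (hP : ‖ContinuousLinearMap.id ℝ X - 2 • P‖ ≤ 1) (hy : ‖y‖ ≤ 1)
    (hδ : ‖x - P x‖ + ‖P (y - x)‖ ≤ δ) : ‖y - x‖ ≤ ‖P (y - x)‖ + e + ‖x - P x‖ := by
  have hhead : ‖P x - P y‖ = ‖P (y - x)‖ := by rw [map_sub, norm_sub_rev]
  have htail : ‖y - P y‖ ≤ e := by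
    apply hmod
    · calc ‖x + (y - P y)‖ = ‖(x - P x) + (P x - P y) + y‖ := by congr 1; abel
        _ ≤ ‖x - P x‖ + ‖P x - P y‖ + ‖y‖ := norm_add₃_le
        _ ≤ 1 + δ := by linarith
    · calc ‖x - (y - P y)‖ = ‖(x - P x) + (P x - P y) + (2 • P y - y)‖ := by congr 1; abel
        _ ≤ ‖x - P x‖ + ‖P x - P y‖ + ‖2 • P y - y‖ := norm_add₃_le
        _ ≤ 1 + δ := by rw [norm_sub_rev (2 • P y)]; linarith [norm_sub_two_smul_apply_le hP y]
  calc ‖y - x‖ = ‖P (y - x) + (y - P y) - (x - P x)‖ := by rw [map_sub]; congr 1; abel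
    _ ≤ ‖P (y - x)‖ + ‖y - P y‖ + ‖x - P x‖ := by
      linarith [norm_sub_le (P (y - x) + (y - P y)) (x - P x),
        norm_add_le (P (y - x)) (y - P y)]
    _ ≤ ‖P (y - x)‖ + e + ‖x - P x‖ := by linarith

end Projection

theorem IsStronglyExtreme.exists_le_norm_apply_sub {x : X} (hse : IsStronglyExtreme x)
    (hx : ‖x‖ = 1) {r : ℝ} (hr : 0 < r) :
    ∃ η > 0, ∃ ρ > 0, ∀ P : X →L[ℝ] X, ‖ContinuousLinearMap.id ℝ X - 2 • P‖ ≤ 1 →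
      ‖x - P x‖ ≤ η → ∀ y : X, ‖y‖ ≤ 1 → r ≤ ‖y - x‖ → ρ ≤ ‖P (y - x)‖ := by
  obtain ⟨δ, hδ, hmod⟩ := hse.exists_modulus hx (by positivity : 0 < r / 4)
  refine ⟨min (δ / 2) (r / 8), by positivity, min (δ / 2) (r / 2), by positivity,
    fun P hP hη y hy hyx => ?_⟩
  by_contra! hρ
  have hη₁ := hη.trans (min_le_left _ _)
  have hη₂ := hη.trans (min_le_right _ _)
  have hρ₁ := hρ.trans_le (min_le_left _ _)
  have hρ₂ := hρ.trans_le (min_le_right _ _)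
  have := norm_sub_le_of_norm_apply_sub_le hmod hP hy (by linarith)
  linarith

theorem ContinuousLinearMap.totallyBounded_image {Y : Type*} [NormedAddCommGroup Y]
    [NormedSpace ℝ Y] (T : X →L[ℝ] Y) [FiniteDimensional ℝ (LinearMap.range T.toLinearMap)]
    {S : Set X} (hS : Bornology.IsBounded S) : TotallyBounded (T '' S) := by
  set T' := T.codRestrict (LinearMap.range T.toLinearMap) (LinearMap.mem_range_self _)
  have hT' : T '' S = Subtype.val '' (T' '' S) := by rw [Set.image_image]; rfl
  rw [hT']
  exact ((T'.lipschitz.isBounded_image hS).isCompact_closure.totallyBounded.subset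
    subset_closure).image uniformContinuous_subtype_val

theorem norm_sub_smul_le_of_modulus {x c s : X} {μ δ e : ℝ}
    (hmod : ∀ u : X, ‖x + u‖ ≤ 1 + δ → ‖x - u‖ ≤ 1 + δ → ‖u‖ ≤ e)
    (hμ₀ : 0 ≤ μ) (hμ₁ : μ ≤ 1) (hs : ‖s‖ ≤ μ) (hcs : ‖c - s‖ ≤ 1 - μ) (hxc : ‖x - c‖ ≤ δ) :
    ‖s - μ • c‖ ≤ e := by
  have hc : ‖c‖ ≤ 1 := by
    calc ‖c‖ = ‖s + (c - s)‖ := by rw [add_sub_cancel]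
      _ ≤ 1 := by linarith [norm_add_le s (c - s)]
  have hμc : ‖μ • c‖ ≤ μ := by
    rw [norm_smul, Real.norm_of_nonneg hμ₀]; exact mul_le_of_le_one_right hμ₀ hc
  have h1μc : ‖(1 - μ) • c‖ ≤ 1 - μ := by
    rw [norm_smul, Real.norm_of_nonneg (by linarith)]
    exact mul_le_of_le_one_right (by linarith) hc
  -- `c ± (s - μ • c)` are convex combinations of points of the unit ball
  apply hmod
  · calc ‖x + (s - μ • c)‖ = ‖(x - c) + s + (1 - μ) • c‖ := by congr 1; module
      _ ≤ ‖x - c‖ + ‖s‖ + ‖(1 - μ) • c‖ := norm_add₃_le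
      _ ≤ 1 + δ := by linarith
  · calc ‖x - (s - μ • c)‖ = ‖(x - c) + (c - s) + μ • c‖ := by congr 1; module
      _ ≤ ‖x - c‖ + ‖c - s‖ + ‖μ • c‖ := norm_add₃_le
      _ ≤ 1 + δ := by linarith

theorem mul_sub_le_norm_sum_smul {ι Y : Type*} [NormedAddCommGroup Y] [NormedSpace ℝ Y]
    {A : Finset ι} {w : ι → ℝ} {v : ι → Y} {a : Y} {σ : ℝ} (hw : ∀ i ∈ A, 0 ≤ w i)
    (hv : ∀ i ∈ A, ‖v i - a‖ ≤ σ) : (∑ i ∈ A, w i) * (‖a‖ - σ) ≤ ‖∑ i ∈ A, w i • v i‖ := by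
  set μ := ∑ i ∈ A, w i
  have hsplit : ∑ i ∈ A, w i • v i = μ • a + ∑ i ∈ A, w i • (v i - a) := by
    simp only [μ, smul_sub, Finset.sum_sub_distrib, Finset.sum_smul, add_sub_cancel]
  have herr : ‖∑ i ∈ A, w i • (v i - a)‖ ≤ μ * σ := by
    rw [Finset.sum_mul]
    refine norm_sum_le_of_le _ fun i hi => ?_
    rw [norm_smul, Real.norm_of_nonneg (hw i hi)]
    exact mul_le_mul_of_nonneg_left (hv i hi) (hw i hi)
  rw [hsplit]
  calc μ * (‖a‖ - σ) = ‖μ • a‖ - μ * σ := by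
        rw [norm_smul, Real.norm_of_nonneg (Finset.sum_nonneg hw)]; ring
    _ ≤ ‖μ • a‖ - ‖∑ i ∈ A, w i • (v i - a)‖ := by linarith
    _ ≤ _ := norm_sub_le_norm_add _ _

theorem norm_sum_smul_le_sum {ι : Type*} {A : Finset ι} {w : ι → ℝ} {p : ι → X}
    (hw : ∀ i ∈ A, 0 ≤ w i) (hp : ∀ i ∈ A, ‖p i‖ ≤ 1) : ‖∑ i ∈ A, w i • p i‖ ≤ ∑ i ∈ A, w i :=
  norm_sum_le_of_le _ fun i hi => by
    rw [norm_smul, Real.norm_of_nonneg (hw i hi)]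
    exact mul_le_of_le_one_right (hw i hi) (hp i hi)

theorem lt_norm_sub_sum_smul_of_modulus {Y : Type*} [NormedAddCommGroup Y] [NormedSpace ℝ Y]
    {x : X} {T : X →L[ℝ] Y} {D : Set X} {N : Finset Y} {ρ δ : ℝ}
    (hmod : ∀ u : X, ‖x + u‖ ≤ 1 + δ → ‖x - u‖ ≤ 1 + δ → ‖u‖ ≤ ρ / (8 * (#N + 1)))
    (hT : ∀ z, ‖T z‖ ≤ ‖z‖) (hDB : ∀ y ∈ D, ‖y‖ ≤ 1) (hρ : 0 < ρ)
    (hfar : ∀ y ∈ D, ρ ≤ ‖T (y - x)‖) (hnet : ∀ y ∈ D, ∃ ν ∈ N, ‖T y - ν‖ < ρ / 4)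
    {ι : Type*} {t : Finset ι} {w : ι → ℝ} {p : ι → X} (hw : ∀ i ∈ t, 0 ≤ w i)
    (hw₁ : ∑ i ∈ t, w i = 1) (hpD : ∀ i ∈ t, p i ∈ D) :
    min δ (ρ / 4) < ‖x - ∑ i ∈ t, w i • p i‖ := by
  classical
  set c := ∑ i ∈ t, w i • p i
  by_contra! hxc
  have hTxc : ‖T x - T c‖ ≤ ρ / 4 := by
    rw [← map_sub]; exact (hT _).trans (hxc.trans (min_le_right _ _))
  choose! g hgN hg using hnet
  obtain ⟨i₀, hi₀⟩ := Finset.nonempty_of_sum_ne_zero (hw₁.trans_ne one_ne_zero)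
  obtain ⟨ν, -, hμ⟩ := Finset.exists_le_sum_fiber_of_maps_to_of_nsmul_le_sum
    (w := w) (fun i hi => hgN _ (hpD i hi)) ⟨_, hgN _ (hpD i₀ hi₀)⟩ (b := 1 / ((#N : ℝ) + 1))
    (by rw [hw₁, nsmul_eq_mul, mul_one_div, div_le_one (by positivity)]; linarith)
  set A := t.filter (fun i => g (p i) = ν)
  set μ := ∑ i ∈ A, w i
  have hAt : A ⊆ t := Finset.filter_subset _ _
  have hμ₀ : 0 < μ := (one_div_pos.mpr (by positivity)).trans_le hμ
  obtain ⟨i₁, hi₁⟩ := Finset.nonempty_of_sum_ne_zero hμ₀.ne'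
  have hgi (i) (hi : i ∈ A) : ‖T (p i) - ν‖ < ρ / 4 := by
    obtain ⟨hit, rfl⟩ := Finset.mem_filter.mp hi; exact hg _ (hpD i hit)
  have hrest : ∑ i ∈ t with ¬g (p i) = ν, w i = 1 - μ := by
    rw [← hw₁, ← Finset.sum_filter_add_sum_filter_not t (fun i => g (p i) = ν) w]; ring
  have hsmall : ‖∑ i ∈ A, w i • p i - μ • c‖ ≤ ρ / (8 * (#N + 1)) := by
    have hrest_nonneg : 0 ≤ ∑ i ∈ t with ¬g (p i) = ν, w i :=
      Finset.sum_nonneg fun i hi => hw i (Finset.mem_filter.mp hi).1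
    have hcs : c - ∑ i ∈ A, w i • p i = ∑ i ∈ t with ¬g (p i) = ν, w i • p i := by
      rw [sub_eq_iff_eq_add']; exact (Finset.sum_filter_add_sum_filter_not _ _ _).symm
    refine norm_sub_smul_le_of_modulus hmod hμ₀.le (by linarith) ?_ ?_
      (hxc.trans (min_le_left _ _))
    · exact norm_sum_smul_le_sum (fun i hi => hw i (hAt hi)) fun i hi => hDB _ (hpD i (hAt hi))
    · rw [hcs, ← hrest]
      exact norm_sum_smul_le_sum (fun i hi => hw i (Finset.mem_filter.mp hi).1)
        fun i hi => hDB _ (hpD i (Finset.mem_filter.mp hi).1)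
  have hbig : μ * (ρ / 4) ≤ ‖T (∑ i ∈ A, w i • p i - μ • c)‖ := by
    have hsum : T (∑ i ∈ A, w i • p i - μ • c) = ∑ i ∈ A, w i • (T (p i) - T c) := by
      simp only [μ, map_sub, map_sum, map_smul, smul_sub, Finset.sum_sub_distrib,
        Finset.sum_smul]
    have hν : ρ / 2 ≤ ‖ν - T c‖ := by
      have := calc ρ ≤ ‖T (p i₁ - x)‖ := hfar _ (hpD i₁ (hAt hi₁))
        _ = ‖(T (p i₁) - ν) + (ν - T c) + (T c - T x)‖ := by rw [map_sub]; congr 1; abel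
        _ ≤ ‖T (p i₁) - ν‖ + ‖ν - T c‖ + ‖T c - T x‖ := norm_add₃_le
      rw [norm_sub_rev (T c)] at this
      linarith [hgi i₁ hi₁]
    rw [hsum]
    refine le_trans ?_ (mul_sub_le_norm_sum_smul (a := ν - T c) (σ := ρ / 4)
      (fun i hi => hw i (hAt hi)) fun i hi => ?_)
    · exact mul_le_mul_of_nonneg_left (by linarith) hμ₀.le
    · rw [sub_sub_sub_cancel_right]; exact (hgi i hi).le
  have hμρ : 1 / (#N + 1) * (ρ / 4) ≤ μ * (ρ / 4) := mul_le_mul_of_nonneg_right hμ (by positivity)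
  have : 1 / ((#N : ℝ) + 1) * (ρ / 4) = 2 * (ρ / (8 * (#N + 1))) := by field_simp; ring
  have : 0 < ρ / (8 * ((#N : ℝ) + 1)) := by positivity
  linarith [(hT _).trans hsmall]

theorem IsStronglyExtreme.notMem_closure_convexHull {Y : Type*} [NormedAddCommGroup Y]
    [NormedSpace ℝ Y] {x : X} (hse : IsStronglyExtreme x) (hx : ‖x‖ = 1) {T : X →L[ℝ] Y}
    (hT : ∀ z, ‖T z‖ ≤ ‖z‖) {D : Set X} (hDB : ∀ y ∈ D, ‖y‖ ≤ 1)
    (hTD : TotallyBounded (T '' D)) {ρ : ℝ} (hρ : 0 < ρ) (hfar : ∀ y ∈ D, ρ ≤ ‖T (y - x)‖) :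
    x ∉ closure (convexHull ℝ D) := by
  obtain ⟨S, hSD, hS, hDS⟩ := finite_approx_of_totallyBounded hTD (ρ / 4) (by positivity)
  have hnet (y) (hy : y ∈ D) : ∃ ν ∈ hS.toFinset, ‖T y - ν‖ < ρ / 4 := by
    obtain ⟨ν, hν, hyν⟩ := Set.mem_iUnion₂.mp (hDS (Set.mem_image_of_mem T hy))
    exact ⟨ν, hS.mem_toFinset.mpr hν, by rwa [← dist_eq_norm]⟩
  obtain ⟨δ, hδ, hmod⟩ := hse.exists_modulus hx
    (e := ρ / (8 * (#hS.toFinset + 1))) (by positivity)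
  intro hxD
  obtain ⟨c, hc, hxc⟩ := Metric.mem_closure_iff.mp hxD (min δ (ρ / 4)) (by positivity)
  rw [_root_.convexHull_eq] at hc
  obtain ⟨ι, t, w, p, hw, hw₁, hpD, rfl⟩ := hc
  rw [dist_eq_norm, Finset.centerMass_eq_of_sum_1 _ _ hw₁] at hxc
  exact hxc.not_gt (lt_norm_sub_sum_smul_of_modulus hmod hT hDB hρ hfar hnet hw hw₁ hpD)

theorem one_lt_rank_of_one_lt_finrank_submodule (K : Submodule ℝ X)
    (hK : 1 < Module.finrank ℝ K) : 1 < Module.rank ℝ X := by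
  have := Module.finite_of_finrank_pos (zero_lt_one.trans hK)
  calc (1 : Cardinal) < Module.finrank ℝ K := by exact_mod_cast hK
    _ = Module.rank ℝ K := Module.finrank_eq_rank ℝ K
    _ ≤ Module.rank ℝ X := K.rank_le

def unitBallSlice (f : X →L[ℝ] ℝ) (δ : ℝ) : Set X :=
  {y : X | ‖y‖ ≤ 1 ∧ sSup (f '' {w : X | ‖w‖ ≤ 1}) - δ < f y}

theorem exists_unitBallSlice_subset_ball {x : X} (hx : ‖x‖ = 1) {r : ℝ} (hr : r ≤ 2)
    (hxD : x ∉ closure (convexHull ℝ {y : X | ‖y‖ ≤ 1 ∧ r ≤ ‖y - x‖})) :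
    ∃ (f : X →L[ℝ] ℝ) (δ : ℝ), f ≠ 0 ∧ 0 < δ ∧ x ∈ unitBallSlice f δ ∧
      unitBallSlice f δ ⊆ ball x r := by
  set D := {y : X | ‖y‖ ≤ 1 ∧ r ≤ ‖y - x‖}
  obtain ⟨f, s, hfD, hfx⟩ := geometric_hahn_banach_closed_point
    (convex_convexHull ℝ D).closure isClosed_closure hxD
  have hfD' (y) (hy : y ∈ D) : f y < s := hfD y (subset_closure (subset_convexHull ℝ D hy))
  have hneg : -x ∈ D := ⟨by rw [norm_neg]; exact hx.le, by
    rw [← neg_add', norm_neg, ← two_smul ℝ, norm_smul, hx]; norm_num; exact hr⟩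
  have hbdd : BddAbove (f '' {w : X | ‖w‖ ≤ 1}) := by
    refine ⟨‖f‖, ?_⟩
    rintro _ ⟨w, hw, rfl⟩
    exact (le_abs_self _).trans
      ((f.le_opNorm w).trans (mul_le_of_le_one_right (norm_nonneg f) hw))
  have hsup : f x ≤ sSup (f '' {w : X | ‖w‖ ≤ 1}) := le_csSup hbdd ⟨x, hx.le, rfl⟩
  refine ⟨f, sSup (f '' {w : X | ‖w‖ ≤ 1}) - (s + f x) / 2, ?_, by linarith,
    ⟨hx.le, by linarith⟩, fun y ⟨hy, hfy⟩ => ?_⟩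
  · rintro rfl
    have := hfD' _ hneg
    rw [zero_apply] at this hfx
    linarith
  · rw [mem_ball, dist_eq_norm]
    by_contra! hyx
    linarith [hfD' y ⟨hy, hyx⟩]

end

theorem stmt12 {X : Type*} [NormedAddCommGroup X] [NormedSpace ℝ X]
    (P : ℕ → X →L[ℝ] X)
    (hrank : ∀ n, Module.finrank ℝ (LinearMap.range (P n).toLinearMap) = n)
    (happrox : ∀ x : X, Tendsto (fun n => ‖P n x - x‖) atTop (nhds 0))
    (hnorm : ∀ n, ‖ContinuousLinearMap.id ℝ X - 2 • P n‖ = 1)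
    (x : X) (hx : ‖x‖ ≤ 1)
    (hse : ∀ u : ℕ → X,
      Tendsto (fun n => ‖x + u n‖) atTop (nhds 1) →
      Tendsto (fun n => ‖x - u n‖) atTop (nhds 1) →
      Tendsto (fun n => ‖u n‖) atTop (nhds 0)) :
    ∀ ε > (0 : ℝ), ∃ (f : X →L[ℝ] ℝ) (δ : ℝ), f ≠ 0 ∧ 0 < δ ∧
      x ∈ {y : X | ‖y‖ ≤ 1 ∧ sSup (f '' {w : X | ‖w‖ ≤ 1}) - δ < f y} ∧
      ∀ y ∈ {y : X | ‖y‖ ≤ 1 ∧ sSup (f '' {w : X | ‖w‖ ≤ 1}) - δ < f y},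
        ∀ z ∈ {y : X | ‖y‖ ≤ 1 ∧ sSup (f '' {w : X | ‖w‖ ≤ 1}) - δ < f y},
          ‖y - z‖ < ε := by
  have hX : 1 < Module.rank ℝ X :=
    one_lt_rank_of_one_lt_finrank_submodule (LinearMap.range (P 2).toLinearMap)
      (by rw [hrank]; norm_num)
  have hx₁ : ‖x‖ = 1 := IsStronglyExtreme.norm_eq_one hX hse hx
  intro ε hε
  set r := min (ε / 2) 2
  obtain ⟨η, hη, ρ, hρ, hfar⟩ :=
    IsStronglyExtreme.exists_le_norm_apply_sub hse hx₁ (r := r) (by positivity)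
  obtain ⟨n, hn, hPx⟩ : ∃ n, 1 ≤ n ∧ ‖x - P n x‖ ≤ η :=
    ((eventually_ge_atTop 1).and ((happrox x).eventually (eventually_le_nhds hη))).exists.imp
      fun n h => ⟨h.1, by rw [norm_sub_rev]; exact h.2⟩
  have : FiniteDimensional ℝ (LinearMap.range (P n).toLinearMap) :=
    Module.finite_of_finrank_pos (by rw [hrank]; omega)
  have hxD := IsStronglyExtreme.notMem_closure_convexHull (D := {y | ‖y‖ ≤ 1 ∧ r ≤ ‖y - x‖})
    hse hx₁ (norm_apply_le_of_norm_id_sub_two_smul_le_one (hnorm n).le) (fun y hy => hy.1)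
    ((P n).totallyBounded_image
      (isBounded_closedBall.subset fun y hy => mem_closedBall_zero_iff.mpr hy.1))
    hρ fun y hy => hfar (P n) (hnorm n).le hPx y hy.1 hy.2
  obtain ⟨f, δ, hf, hδ, hxS, hS⟩ := exists_unitBallSlice_subset_ball hx₁ (min_le_right _ _) hxD
  refine ⟨f, δ, hf, hδ, hxS, fun y hy z hz => ?_⟩
  rw [← dist_eq_norm]
  calc dist y z ≤ dist y x + dist z x := dist_triangle_right _ _ _
    _ < r + r := add_lt_add (hS hy) (hS hz)
    _ ≤ ε := by linarith [min_le_left (ε / 2) 2]
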